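/- arXiv:2007.14578 — 6 statements merged into one kernel-verified Lean document; each statement's English description precedes it below -/
import Mathlib

section
/- Let n ≥ 1, p ∈ [1,∞], and let f, g, h : ℝ^n → ℝ be measurable functions such that f is continuously differentiable with gradient ∇f ∈ L^p(ℝ^n), g ∈ L^∞(ℝ^n), h ∈ L^1(ℝ^n), and the function x ↦ ‖x‖·|h(x)| belongs to L^1(ℝ^n). Then ‖h*(fg) − f·(h*g)‖_{L^p(ℝ^n)} ≤ ‖x·h(x)‖_{L^1_x(ℝ^n)} · ‖∇f‖_{L^p(ℝ^n)} · ‖g‖_{L^∞(ℝ^n)}. -/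
open MeasureTheory Set Function
open scoped ENNReal

/-!
The commutator at `x` is `∫ h (x - y) (f y - f x) g y dy`, and along the segment from `x` to `y`
the fundamental theorem of calculus bounds `|f y - f x|` by `|x - y| ∫₀¹ |∇f (x - t (x - y))| dt`.
Hence the commutator is dominated by `‖g‖_∞` times an average of the translates
`x ↦ |∇f (x - t z)|` against the measure `|z| |h z| dz dt` of mass `‖x h‖_{L¹}`. Translations
preserve the `L^p` norm, so such an average has `L^p` norm at most the mass times `‖∇f‖_p`:
for `p < ∞` by Jensen's inequality for that measure, for `p = ∞` directly.
-/

theorem enorm_sub_le_enorm_mul_lintegral_fderiv {E F : Type*} [NormedAddCommGroup E]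
    [NormedSpace ℝ E] [NormedAddCommGroup F] [NormedSpace ℝ F] [CompleteSpace F]
    {f : E → F} (hf : ContDiff ℝ 1 f) (x z : E) :
    ‖f (x - z) - f x‖ₑ ≤ ‖z‖ₑ * ∫⁻ t in Ioc (0 : ℝ) 1, ‖fderiv ℝ f (x - t • z)‖ₑ := by
  have hderiv (t : ℝ) :
      HasDerivAt (fun s : ℝ => f (x - s • z)) (fderiv ℝ f (x - t • z) (-z)) t := by
    have hline : HasDerivAt (fun s : ℝ => x - s • z) (-z) t := by
      simpa using ((hasDerivAt_id t).smul_const z).const_sub x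
    exact (hf.differentiable one_ne_zero _).hasFDerivAt.comp_hasDerivAt t hline
  have hcont : Continuous fun t : ℝ => fderiv ℝ f (x - t • z) (-z) := by fun_prop
  have hftc : f (x - z) - f x = ∫ t in Ioc (0 : ℝ) 1, fderiv ℝ f (x - t • z) (-z) := by
    rw [← intervalIntegral.integral_of_le zero_le_one,
      intervalIntegral.integral_eq_sub_of_hasDerivAt (fun t _ => hderiv t)
        (hcont.intervalIntegrable 0 1)]
    simp
  calc ‖f (x - z) - f x‖ₑ ≤ ∫⁻ t in Ioc (0 : ℝ) 1, ‖fderiv ℝ f (x - t • z) (-z)‖ₑ :=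
        hftc ▸ enorm_integral_le_lintegral_enorm _
    _ ≤ ∫⁻ t in Ioc (0 : ℝ) 1, ‖z‖ₑ * ‖fderiv ℝ f (x - t • z)‖ₑ :=
        lintegral_mono fun t => by
          simpa [mul_comm] using (fderiv ℝ f (x - t • z)).le_opENorm (-z)
    _ = ‖z‖ₑ * ∫⁻ t in Ioc (0 : ℝ) 1, ‖fderiv ℝ f (x - t • z)‖ₑ :=
        lintegral_const_mul' _ _ enorm_ne_top

theorem enorm_integral_mul_sub_const_mul_integral_le {α : Type*} [MeasurableSpace α]
    {μ : Measure α} {k φ g : α → ℝ} (a : ℝ) (hk : AEStronglyMeasurable k μ)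
    (hφ : AEStronglyMeasurable φ μ) (hkg : Integrable (fun y => k y * g y) μ) :
    ‖(∫ y, k y * (φ y * g y) ∂μ) - a * ∫ y, k y * g y ∂μ‖ₑ ≤
      eLpNorm g ∞ μ * ∫⁻ y, ‖k y‖ₑ * ‖φ y - a‖ₑ ∂μ := by
  set u : α → ℝ := fun y => (φ y - a) * (k y * g y)
  have hu_le : ∫⁻ y, ‖u y‖ₑ ∂μ ≤ eLpNorm g ∞ μ * ∫⁻ y, ‖k y‖ₑ * ‖φ y - a‖ₑ ∂μ := by
    have hmeas : AEMeasurable (fun y => ‖k y‖ₑ * ‖φ y - a‖ₑ) μ :=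
      hk.enorm.mul (hφ.sub aestronglyMeasurable_const).enorm
    rw [← lintegral_const_mul'' _ hmeas]
    refine lintegral_mono_ae ((eLpNorm_exponent_top (f := g) ▸
      enorm_ae_le_eLpNormEssSup g μ).mono fun y hy => ?_)
    calc ‖u y‖ₑ = ‖g y‖ₑ * (‖k y‖ₑ * ‖φ y - a‖ₑ) := by
          simp only [u, enorm_mul]; ring
      _ ≤ _ := by gcongr
  rcases eq_top_or_lt_top (eLpNorm g ∞ μ * ∫⁻ y, ‖k y‖ₑ * ‖φ y - a‖ₑ ∂μ) with htop | hfin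
  · rw [htop]; exact le_top
  have hu : Integrable u μ :=
    ⟨(hφ.sub aestronglyMeasurable_const).mul hkg.1, hu_le.trans_lt hfin⟩
  have hsplit : (fun y => k y * (φ y * g y)) = fun y => u y + a * (k y * g y) := by
    funext y; simp only [u]; ring
  rw [hsplit, integral_add hu (hkg.const_mul a), integral_const_mul, add_sub_cancel_right]
  exact (enorm_integral_le_lintegral_enorm u).trans hu_le

theorem lintegral_rpow_le_measure_univ_rpow_mul_lintegral_rpow {α : Type*} [MeasurableSpace α]
    (ρ : Measure α) {r : ℝ} (hr : 1 ≤ r) {F : α → ℝ≥0∞} (hF : AEMeasurable F ρ) :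
    (∫⁻ a, F a ∂ρ) ^ r ≤ ρ univ ^ (r - 1) * ∫⁻ a, F a ^ r ∂ρ := by
  have hr0 : 0 < r := zero_lt_one.trans_le hr
  have hholder :=
    eLpNorm'_le_eLpNorm'_mul_rpow_measure_univ zero_lt_one hr hF.aestronglyMeasurable
  simp only [eLpNorm', enorm_eq_self, ENNReal.rpow_one, div_one] at hholder
  calc (∫⁻ a, F a ∂ρ) ^ r
      ≤ ((∫⁻ a, F a ^ r ∂ρ) ^ (1 / r) * ρ univ ^ (1 - 1 / r)) ^ r := by gcongr
    _ = ρ univ ^ (r - 1) * ∫⁻ a, F a ^ r ∂ρ := by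
      rw [ENNReal.mul_rpow_of_nonneg _ _ hr0.le, ← ENNReal.rpow_mul, ← ENNReal.rpow_mul,
        one_div_mul_cancel hr0.ne', ENNReal.rpow_one, sub_mul, one_div_mul_cancel hr0.ne',
        one_mul, mul_comm]

section TranslationAverage

variable {α β : Type*} [MeasurableSpace α] [MeasurableSpace β] {μ : Measure α} {ν : Measure β}
  [SFinite μ] [SFinite ν] {T : β → α → α} {w : β → ℝ≥0∞} {N : α → ℝ≥0∞}

theorem lintegral_rpow_lintegral_mul_comp_le (hT : Measurable (uncurry T))
    (hTμ : ∀ q, MeasurePreserving (T q) μ μ) (hw : Measurable w) (hN : Measurable N)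
    {r : ℝ} (hr : 1 ≤ r) :
    ∫⁻ x, (∫⁻ q, w q * N (T q x) ∂ν) ^ r ∂μ ≤ (∫⁻ q, w q ∂ν) ^ r * ∫⁻ x, N x ^ r ∂μ := by
  set I := ∫⁻ q, w q ∂ν
  have hNT : Measurable fun z : α × β => N (T z.2 z.1) := hN.comp (hT.comp measurable_swap)
  have hjensen (x : α) :
      (∫⁻ q, w q * N (T q x) ∂ν) ^ r ≤ I ^ (r - 1) * ∫⁻ q, w q * N (T q x) ^ r ∂ν := by
    have hρ : (ν.withDensity w) univ = I := by
      rw [withDensity_apply _ MeasurableSet.univ, Measure.restrict_univ]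
    have hmeas : Measurable fun q => N (T q x) := hNT.comp measurable_prodMk_left
    have hdens {F : β → ℝ≥0∞} (hF : Measurable F) :
        ∫⁻ q, F q ∂ν.withDensity w = ∫⁻ q, w q * F q ∂ν :=
      lintegral_withDensity_eq_lintegral_mul _ hw hF
    rw [← hdens hmeas, ← hdens (hmeas.pow_const r), ← hρ]
    exact lintegral_rpow_le_measure_univ_rpow_mul_lintegral_rpow _ hr hmeas.aemeasurable
  have hF : Measurable fun z : α × β => w z.2 * N (T z.2 z.1) ^ r :=
    (hw.comp measurable_snd).mul (hNT.pow_const r)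
  have hI : I ^ (r - 1) * I = I ^ r := by
    conv_rhs => rw [← sub_add_cancel r 1,
      ENNReal.rpow_add_of_nonneg _ _ (sub_nonneg.mpr hr) zero_le_one, ENNReal.rpow_one]
  calc ∫⁻ x, (∫⁻ q, w q * N (T q x) ∂ν) ^ r ∂μ
      ≤ ∫⁻ x, I ^ (r - 1) * ∫⁻ q, w q * N (T q x) ^ r ∂ν ∂μ := lintegral_mono hjensen
    _ = I ^ (r - 1) * ∫⁻ q, w q * ∫⁻ x, N (T q x) ^ r ∂μ ∂ν := by
      rw [lintegral_const_mul _ hF.lintegral_prod_right, lintegral_lintegral_swap hF.aemeasurable]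
      congr 1
      exact lintegral_congr fun q =>
        lintegral_const_mul _ ((hNT.comp (measurable_id.prodMk measurable_const)).pow_const r)
    _ = I ^ r * ∫⁻ x, N x ^ r ∂μ := by
      simp_rw [fun q => (hTμ q).lintegral_comp (hN.pow_const r)]
      rw [lintegral_mul_const _ hw, ← mul_assoc, hI]

theorem eLpNorm_top_lintegral_mul_comp_le (hT : Measurable (uncurry T))
    (hTμ : ∀ q, MeasurePreserving (T q) μ μ) (hw : Measurable w) (hN : Measurable N) :
    eLpNorm (fun x => ∫⁻ q, w q * N (T q x) ∂ν) ∞ μ ≤ (∫⁻ q, w q ∂ν) * eLpNorm N ∞ μ := by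
  set S := eLpNorm N ∞ μ
  have hS (q : β) : ∀ᵐ x ∂μ, N (T q x) ≤ S :=
    (hTμ q).quasiMeasurePreserving.ae
      (eLpNorm_exponent_top (f := N) ▸ enorm_ae_le_eLpNormEssSup N μ)
  have hmeas : MeasurableSet {z : α × β | N (T z.2 z.1) ≤ S} :=
    measurableSet_le (hN.comp (hT.comp measurable_swap)) measurable_const
  have hae : ∀ᵐ x ∂μ, ∀ᵐ q ∂ν, N (T q x) ≤ S :=
    (Measure.ae_ae_comm hmeas).mpr (ae_of_all _ hS)
  rw [eLpNorm_exponent_top]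
  refine essSup_le_of_ae_le _ (hae.mono fun x hx => ?_)
  calc ‖∫⁻ q, w q * N (T q x) ∂ν‖ₑ ≤ ∫⁻ q, w q * S ∂ν :=
        lintegral_mono_ae (hx.mono fun q hq => by gcongr)
    _ = (∫⁻ q, w q ∂ν) * S := lintegral_mul_const _ hw

theorem eLpNorm_lintegral_mul_comp_le (hT : Measurable (uncurry T))
    (hTμ : ∀ q, MeasurePreserving (T q) μ μ) (hw : Measurable w) (hN : Measurable N)
    {p : ℝ≥0∞} (hp : 1 ≤ p) :
    eLpNorm (fun x => ∫⁻ q, w q * N (T q x) ∂ν) p μ ≤ (∫⁻ q, w q ∂ν) * eLpNorm N p μ := by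
  rcases eq_or_ne p ∞ with rfl | hp_top
  · exact eLpNorm_top_lintegral_mul_comp_le hT hTμ hw hN
  have hr : 1 ≤ p.toReal := ENNReal.toReal_mono hp_top hp
  have hr0 : 0 < p.toReal := zero_lt_one.trans_le hr
  simp only [eLpNorm_eq_lintegral_rpow_enorm_toReal (zero_lt_one.trans_le hp).ne' hp_top,
    enorm_eq_self]
  calc (∫⁻ x, (∫⁻ q, w q * N (T q x) ∂ν) ^ p.toReal ∂μ) ^ (1 / p.toReal)
      ≤ ((∫⁻ q, w q ∂ν) ^ p.toReal * ∫⁻ x, N x ^ p.toReal ∂μ) ^ (1 / p.toReal) := by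
        gcongr
        exact lintegral_rpow_lintegral_mul_comp_le hT hTμ hw hN hr
    _ = (∫⁻ q, w q ∂ν) * (∫⁻ x, N x ^ p.toReal ∂μ) ^ (1 / p.toReal) := by
        rw [ENNReal.mul_rpow_of_nonneg _ _ (by positivity), ← ENNReal.rpow_mul,
          mul_one_div_cancel hr0.ne', ENNReal.rpow_one]

end TranslationAverage

section Commutator

variable {E : Type*} [NormedAddCommGroup E] [NormedSpace ℝ E] [MeasurableSpace E] [BorelSpace E]
  [SecondCountableTopology E] {μ : Measure E} [μ.IsAddLeftInvariant] [μ.IsNegInvariant]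

theorem lintegral_enorm_mul_enorm_sub_le_lintegral_prod_fderiv {F : Type*} [NormedAddCommGroup F]
    [NormedSpace ℝ F] [CompleteSpace F] {f : E → F} (hf : ContDiff ℝ 1 f) {h : E → ℝ}
    (hh : Measurable h) (x : E) :
    ∫⁻ y, ‖h (x - y)‖ₑ * ‖f y - f x‖ₑ ∂μ ≤
      ∫⁻ q, ‖q.1‖ₑ * ‖h q.1‖ₑ * ‖fderiv ℝ f (x - q.2 • q.1)‖ₑ
        ∂μ.prod (volume.restrict (Ioc (0 : ℝ) 1)) := by
  have hN : Measurable fun q : E × ℝ => ‖fderiv ℝ f (x - q.2 • q.1)‖ₑ :=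
    ((hf.continuous_fderiv one_ne_zero).measurable.comp
      (measurable_const.sub (measurable_snd.smul measurable_fst))).enorm
  calc ∫⁻ y, ‖h (x - y)‖ₑ * ‖f y - f x‖ₑ ∂μ
      = ∫⁻ z, ‖h z‖ₑ * ‖f (x - z) - f x‖ₑ ∂μ := by
        simpa using lintegral_sub_left_eq_self (fun z => ‖h z‖ₑ * ‖f (x - z) - f x‖ₑ) x
    _ ≤ ∫⁻ z, ‖h z‖ₑ * (‖z‖ₑ * ∫⁻ t in Ioc (0 : ℝ) 1, ‖fderiv ℝ f (x - t • z)‖ₑ) ∂μ := by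
        gcongr with z
        exact enorm_sub_le_enorm_mul_lintegral_fderiv hf x z
    _ = ∫⁻ z, (∫⁻ t in Ioc (0 : ℝ) 1, ‖z‖ₑ * ‖h z‖ₑ * ‖fderiv ℝ f (x - t • z)‖ₑ) ∂μ := by
        refine lintegral_congr fun z => ?_
        rw [lintegral_const_mul' _ _ (by finiteness), mul_left_comm, mul_assoc]
    _ = _ := (lintegral_prod _ (((measurable_fst.enorm.mul (hh.comp measurable_fst).enorm).mul
        hN).aemeasurable)).symm

variable {f g h : E → ℝ}

theorem enorm_convolution_commutator_le (hf : ContDiff ℝ 1 f) (hh : Measurable h) (hg : MemLp g ∞ μ)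
    (hh_int : Integrable h μ) (x : E) :
    ‖(∫ y, h (x - y) * (f y * g y) ∂μ) - f x * ∫ y, h (x - y) * g y ∂μ‖ₑ ≤
      eLpNorm g ∞ μ * ∫⁻ q, ‖q.1‖ₑ * ‖h q.1‖ₑ * ‖fderiv ℝ f (x - q.2 • q.1)‖ₑ
        ∂μ.prod (volume.restrict (Ioc (0 : ℝ) 1)) :=
  (enorm_integral_mul_sub_const_mul_integral_le (f x)
    (hh.comp (measurable_const.sub measurable_id)).aestronglyMeasurable
    hf.continuous.aestronglyMeasurable ((hh_int.comp_sub_left x).mul_of_top_left hg)).trans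
    (by gcongr; exact lintegral_enorm_mul_enorm_sub_le_lintegral_prod_fderiv hf hh x)

theorem eLpNorm_convolution_commutator_le [SFinite μ] (hf : ContDiff ℝ 1 f) (hh : Measurable h)
    (hg : MemLp g ∞ μ) (hh_int : Integrable h μ) {p : ℝ≥0∞} (hp : 1 ≤ p) :
    eLpNorm (fun x => (∫ y, h (x - y) * (f y * g y) ∂μ) - f x * ∫ y, h (x - y) * g y ∂μ) p μ ≤
      (∫⁻ x, ‖x‖ₑ * ‖h x‖ₑ ∂μ) * eLpNorm (fderiv ℝ f) p μ * eLpNorm g ∞ μ := by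
  set ν := μ.prod (volume.restrict (Ioc (0 : ℝ) 1))
  set w : E × ℝ → ℝ≥0∞ := fun q => ‖q.1‖ₑ * ‖h q.1‖ₑ
  set N : E → ℝ≥0∞ := fun x => ‖fderiv ℝ f x‖ₑ
  have hw : Measurable w := measurable_fst.enorm.mul (hh.comp measurable_fst).enorm
  have hN : Measurable N := (hf.continuous_fderiv one_ne_zero).measurable.enorm
  have hT : Measurable (uncurry fun (q : E × ℝ) x => x - q.2 • q.1) :=
    measurable_snd.sub (measurable_fst.snd.smul measurable_fst.fst)
  have hΦ : Measurable fun x => ∫⁻ q, w q * N (x - q.2 • q.1) ∂ν :=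
    ((hw.comp measurable_snd).mul (hN.comp (hT.comp measurable_swap))).lintegral_prod_right
  have hI : ∫⁻ q, w q ∂ν = ∫⁻ x, ‖x‖ₑ * ‖h x‖ₑ ∂μ := by
    simp only [ν, w, lintegral_prod _ hw.aemeasurable, lintegral_const,
      Measure.restrict_apply_univ, Real.volume_Ioc, sub_zero, ENNReal.ofReal_one, mul_one]
  calc _ ≤ eLpNorm g ∞ μ * eLpNorm (fun x => ∫⁻ q, w q * N (x - q.2 • q.1) ∂ν) p μ :=
        eLpNorm_le_mul_eLpNorm_of_ae_le_mul'' p hΦ.aestronglyMeasurable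
          (ae_of_all _ (enorm_convolution_commutator_le hf hh hg hh_int))
    _ ≤ eLpNorm g ∞ μ * ((∫⁻ q, w q ∂ν) * eLpNorm N p μ) := by
        gcongr
        exact eLpNorm_lintegral_mul_comp_le hT (fun q => measurePreserving_sub_right _ _) hw hN hp
    _ = _ := by rw [hI, eLpNorm_enorm]; ring

end Commutator

theorem commutator_convolution_Lp_general (n : ℕ) (p : ℝ≥0∞) (hp : 1 ≤ p)
    (f g h : EuclideanSpace ℝ (Fin n) → ℝ)
    (hf : ContDiff ℝ 1 f) (hh : Measurable h)
    (hgb : MemLp g ∞ volume)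
    (hhint : Integrable h volume)
    (hxh : Integrable (fun x => ‖x‖ * |h x|) volume) :
    eLpNorm (fun x => (∫ y, h (x - y) * (f y * g y)) - f x * ∫ y, h (x - y) * g y) p volume
      ≤ ENNReal.ofReal (∫ x, ‖x‖ * |h x|) * eLpNorm (fun x => fderiv ℝ f x) p volume *
          eLpNorm g ∞ volume := by
  have hweight : ENNReal.ofReal (∫ x, ‖x‖ * |h x|) = ∫⁻ x, ‖x‖ₑ * ‖h x‖ₑ := by
    rw [ofReal_integral_eq_lintegral_ofReal hxh (ae_of_all _ fun x => by positivity)]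
    refine lintegral_congr fun x => ?_
    rw [ENNReal.ofReal_mul (norm_nonneg x), ofReal_norm, Real.enorm_eq_ofReal_abs]
  rw [hweight]
  exact eLpNorm_convolution_commutator_le hf hh hgb hhint hp

/-- Commutator estimate for convolution against multiplication (Lemma 3.2 of
Hmidi–Keraani–Rousset), `L^p`–`L^∞` version. -/
theorem commutator_convolution_Lp (n : ℕ) (hn : 1 ≤ n) (p : ℝ≥0∞) (hp : 1 ≤ p)
    (f g h : EuclideanSpace ℝ (Fin n) → ℝ)
    (hf : ContDiff ℝ 1 f) (hg : Measurable g) (hh : Measurable h)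
    (hfp : MemLp (fun x => fderiv ℝ f x) p volume)
    (hgb : MemLp g ∞ volume)
    (hhint : Integrable h volume)
    (hxh : Integrable (fun x => ‖x‖ * |h x|) volume) :
    eLpNorm (fun x => (∫ y, h (x - y) * (f y * g y)) - f x * ∫ y, h (x - y) * g y) p volume
      ≤ ENNReal.ofReal (∫ x, ‖x‖ * |h x|) * eLpNorm (fun x => fderiv ℝ f x) p volume *
          eLpNorm g ∞ volume :=
  commutator_convolution_Lp_general n p hp f g h hf hh hgb hhint hxh
end

section
/- Let n ≥ 1 and let f, g, h : ℝ^n → ℝ be measurable functions such that f is continuously differentiable with f and ∇f bounded, g is bounded, h ∈ L^1(ℝ^n), and x ↦ ‖x‖·|h(x)| belongs to L^1(ℝ^n). Then for every x ∈ ℝ^n, (h*(fg))(x) − f(x)·(h*g)(x) = −∫_0^1 ∫_{ℝ^n} h(z) · (∇f(x − τz) · z) · g(x − z) dz dτ, where ∇f(x−τz)·z denotes the Euclidean inner product. -/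
/-!
After the substitution `y = x - z` the commutator becomes
`∫ h z * (f (x - z) - f x) * g (x - z) dz`, and the fundamental theorem of calculus along the
segment from `x` to `x - z` turns `f (x - z) - f x` into `-∫₀¹ Df(x - τz) z dτ`. Since
`|Df(x - τz) z| ≤ ‖Df‖_∞ ‖z‖`, the moment condition on `h` makes the integrand jointly
integrable on `ℝⁿ × [0, 1]`, so Fubini exchanges the two integrals.
-/

open MeasureTheory Set Function

theorem sub_eq_neg_integral_fderiv_sub_smul {E F : Type*}
    [NormedAddCommGroup E] [NormedSpace ℝ E]
    [NormedAddCommGroup F] [NormedSpace ℝ F] [CompleteSpace F] {f : E → F}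
    (hf : ContDiff ℝ 1 f) (x z : E) :
    f (x - z) - f x = -∫ τ in (0:ℝ)..1, fderiv ℝ f (x - τ • z) z := by
  have taylor := map_add_eq_sum_add_integral_iteratedFDeriv (n := 0) (x := x) (y := -z)
    (fun _ _ => hf.contDiffAt)
  simp only [← sub_eq_add_neg, zero_add, Finset.range_one, Finset.sum_singleton,
    Nat.factorial_zero, Nat.cast_one, inv_one, iteratedFDeriv_zero_apply, one_smul, pow_zero,
    Nat.reduceAdd, smul_neg, iteratedFDeriv_one_apply, map_neg,
    intervalIntegral.integral_neg] at taylor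
  rw [taylor]
  abel

section Commutator

variable {G : Type*} [MeasurableSpace G] [AddCommGroup G] [MeasurableAdd G] [MeasurableNeg G]
  {μ : Measure G}

theorem MeasureTheory.Integrable.mul_comp_sub_of_abs_le {h g : G → ℝ} {C : ℝ}
    (hh : Integrable h μ) (hg : Measurable g) (hgb : ∀ y, |g y| ≤ C) (x : G) :
    Integrable (fun z => h z * g (x - z)) μ :=
  hh.mul_bdd (hg.comp (measurable_id.const_sub x)).aestronglyMeasurable
    (ae_of_all _ fun z => hgb (x - z))

theorem integral_mul_sub_mul_integral_eq [μ.IsAddLeftInvariant] [μ.IsNegInvariant]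
    {f g h : G → ℝ} {Cf Cg : ℝ}
    (hf : Measurable f) (hfb : ∀ y, |f y| ≤ Cf) (hg : Measurable g) (hgb : ∀ y, |g y| ≤ Cg)
    (hh : Integrable h μ) (x : G) :
    (∫ y, h (x - y) * (f y * g y) ∂μ) - f x * ∫ y, h (x - y) * g y ∂μ
      = ∫ z, (f (x - z) - f x) * (h z * g (x - z)) ∂μ := by
  have hfgb : ∀ y, |f y * g y| ≤ Cf * Cg := fun y => by
    rw [abs_mul]
    exact mul_le_mul (hfb y) (hgb y) (abs_nonneg _) ((abs_nonneg _).trans (hfb y))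
  have hfg : Integrable (fun z => h z * (f (x - z) * g (x - z))) μ :=
    hh.mul_comp_sub_of_abs_le (hf.mul hg) hfgb x
  have hhg := hh.mul_comp_sub_of_abs_le hg hgb x
  rw [← integral_sub_left_eq_self _ μ x,
    ← integral_sub_left_eq_self (fun y => h (x - y) * g y) μ x]
  simp only [sub_sub_cancel]
  rw [← integral_const_mul, ← integral_sub hfg (hhg.const_mul (f x))]
  congr 1 with z
  ring

end Commutator

theorem integrable_prod_mul_fderiv_mul {E : Type*} [NormedAddCommGroup E] [NormedSpace ℝ E]
    [MeasurableSpace E] [BorelSpace E] [SecondCountableTopology E]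
    {μ : Measure E} [SFinite μ] {ν : Measure ℝ} [IsFiniteMeasure ν]
    {f g h : E → ℝ} {Cd Cg : ℝ} (hf : ContDiff ℝ 1 f) (hdfb : ∀ y, ‖fderiv ℝ f y‖ ≤ Cd)
    (hg : Measurable g) (hgb : ∀ y, |g y| ≤ Cg) (hh : AEStronglyMeasurable h μ)
    (hxh : Integrable (fun z => ‖z‖ * |h z|) μ) (x : E) :
    Integrable (uncurry fun z τ => h z * (fderiv ℝ f (x - τ • z) z * g (x - z))) (μ.prod ν) := by
  have hD : Continuous fun p : E × ℝ => fderiv ℝ f (x - p.2 • p.1) p.1 :=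
    ((hf.continuous_fderiv one_ne_zero).comp (by fun_prop)).clm_apply continuous_fst
  refine Integrable.mono' (((hxh.const_mul (Cd * Cg)).comp_fst (ν := ν)))
    (hh.comp_fst.mul (hD.aestronglyMeasurable.mul
      (hg.comp (measurable_const.sub measurable_fst)).aestronglyMeasurable))
    (ae_of_all _ fun p => ?_)
  have hDp : |fderiv ℝ f (x - p.2 • p.1) p.1| ≤ Cd * ‖p.1‖ :=
    ((fderiv ℝ f _).le_opNorm p.1).trans (by gcongr; exact hdfb _)
  calc ‖h p.1 * (fderiv ℝ f (x - p.2 • p.1) p.1 * g (x - p.1))‖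
      = |h p.1| * (|fderiv ℝ f (x - p.2 • p.1) p.1| * |g (x - p.1)|) := by
        rw [Real.norm_eq_abs, abs_mul, abs_mul]
    _ ≤ |h p.1| * ((Cd * ‖p.1‖) * Cg) := by gcongr; exacts [(abs_nonneg _).trans hDp, hgb _]
    _ = Cd * Cg * (‖p.1‖ * |h p.1|) := by ring

theorem commutator_convolution_formula_general (n : ℕ)
    (f g h : EuclideanSpace ℝ (Fin n) → ℝ)
    (hf : ContDiff ℝ 1 f)
    (hfb : ∃ M, ∀ x, |f x| ≤ M)
    (hdfb : ∃ M, ∀ x, ‖fderiv ℝ f x‖ ≤ M)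
    (hg : Measurable g) (hgb : ∃ M, ∀ x, |g x| ≤ M)
    (hhint : Integrable h volume)
    (hxh : Integrable (fun x => ‖x‖ * |h x|) volume)
    (x : EuclideanSpace ℝ (Fin n)) :
    (∫ y, h (x - y) * (f y * g y)) - f x * (∫ y, h (x - y) * g y)
      = -∫ τ in (0:ℝ)..1, ∫ z, h z * (fderiv ℝ f (x - τ • z) z * g (x - z)) := by
  obtain ⟨Cf, hCf⟩ := hfb
  obtain ⟨Cd, hCd⟩ := hdfb
  obtain ⟨Cg, hCg⟩ := hgb
  have ftc (z) : (f (x - z) - f x) * (h z * g (x - z))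
      = -∫ τ in (0:ℝ)..1, h z * (fderiv ℝ f (x - τ • z) z * g (x - z)) := by
    rw [sub_eq_neg_integral_fderiv_sub_smul hf, neg_mul, ← intervalIntegral.integral_mul_const]
    congr 2 with τ
    ring
  have fubini := integral_integral_swap <| integrable_prod_mul_fderiv_mul
    (ν := volume.restrict (Ioc 0 1)) hf hCd hg hCg hhint.aestronglyMeasurable hxh x
  rw [integral_mul_sub_mul_integral_eq hf.continuous.measurable hCf hg hCg hhint x]
  simp only [ftc, integral_neg, intervalIntegral.integral_of_le zero_le_one, fubini]

/-- Pointwise integral formula for the commutator of convolution with `h` and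
multiplication by `f`. -/
theorem commutator_convolution_formula (n : ℕ) (hn : 1 ≤ n)
    (f g h : EuclideanSpace ℝ (Fin n) → ℝ)
    (hf : ContDiff ℝ 1 f)
    (hfb : ∃ M, ∀ x, |f x| ≤ M)
    (hdfb : ∃ M, ∀ x, ‖fderiv ℝ f x‖ ≤ M)
    (hg : Measurable g) (hgb : ∃ M, ∀ x, |g x| ≤ M)
    (hh : Measurable h)
    (hhint : Integrable h volume)
    (hxh : Integrable (fun x => ‖x‖ * |h x|) volume)
    (x : EuclideanSpace ℝ (Fin n)) :
    (∫ y, h (x - y) * (f y * g y)) - f x * (∫ y, h (x - y) * g y)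
      = -∫ τ in (0:ℝ)..1, ∫ z, h z * (fderiv ℝ f (x - τ • z) z * g (x - z)) :=
  commutator_convolution_formula_general n f g h hf hfb hdfb hg hgb hhint hxh x
end

section
/- Let d ≥ 1, T > 0, let u : [0,T] × ℝ^d → ℝ^d be continuously differentiable and divergence-free in the space variable (that is, for every t and x, the trace of the spatial derivative D_x u(t,x) vanishes), and let θ : [0,T] × ℝ^d → ℝ be continuously differentiable, with the support of θ(t,·) contained in a fixed compact set K ⊆ ℝ^d for all t ∈ [0,T]. Assume that θ solves the transport equation ∂_t θ(t,x) + u(t,x)·∇_x θ(t,x) = 0 for all (t,x) ∈ [0,T] × ℝ^d. Then for every p ∈ [1,∞] and every t ∈ [0,T], ‖θ(t,·)‖_{L^p(ℝ^d)} ≤ ‖θ(0,·)‖_{L^p(ℝ^d)}. -/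
/-!
For every `C¹` function `g` with `g 0 = 0` the integral `∫ g (θ t x) dx` does not depend on `t`:
by the transport equation its time derivative is `-∫ ∇(g ∘ θ t) · u t`, which an integration by
parts turns into `∫ (div u t) (g ∘ θ t) = 0`. Taking `g y = exp (i ξ y) - 1` shows that the laws
of `θ t` and `θ 0` under Lebesgue measure restricted to `K` have the same characteristic function,
hence coincide, and `L^p` norms only depend on the law.
-/

open MeasureTheory Set Function
open scoped ENNReal Topology

theorem LinearMap.trace_eq_sum_repr {ι R M : Type*} [Fintype ι] [DecidableEq ι] [CommRing R]
    [AddCommGroup M] [Module R M] (b : Module.Basis ι R M) (f : M →ₗ[R] M) :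
    LinearMap.trace R M f = ∑ i, b.repr (f (b i)) i := by
  rw [LinearMap.trace_eq_matrix_trace R b f]
  exact Fintype.sum_congr _ _ fun i => LinearMap.toMatrix_apply b b f i i

theorem integral_fderiv_apply_eq_neg_integral_trace_smul {E F : Type*} [NormedAddCommGroup E]
    [NormedSpace ℝ E] [FiniteDimensional ℝ E] [MeasurableSpace E] [BorelSpace E]
    {μ : Measure E} [μ.IsAddHaarMeasure] [NormedAddCommGroup F] [NormedSpace ℝ F]
    {φ : E → F} {u : E → E}
    (hφ : ContDiff ℝ 1 φ) (hφc : HasCompactSupport φ) (hu : ContDiff ℝ 1 u) :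
    ∫ x, fderiv ℝ φ x (u x) ∂μ =
      -∫ x, LinearMap.trace ℝ E (fderiv ℝ u x : E →ₗ[ℝ] E) • φ x ∂μ := by
  let b := Module.finBasis ℝ E
  let c : Fin _ → E →L[ℝ] ℝ := fun i => LinearMap.toContinuousLinearMap (b.coord i)
  have hc : ∀ i y, c i y = b.repr y i := fun i y => rfl
  have hcu : ∀ i, ContDiff ℝ 1 (fun x => c i (u x)) := fun i => (c i).contDiff.comp hu
  have hfderiv_cu : ∀ i x v, fderiv ℝ (fun x => c i (u x)) x v = c i (fderiv ℝ u x v) :=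
    fun i x v => by
      rw [fderiv_fun_comp x (c i).differentiableAt (hu.differentiable one_ne_zero x)]
      simp
  have hφ' : Continuous (fderiv ℝ φ) := hφ.continuous_fderiv one_ne_zero
  have hu' : Continuous (fderiv ℝ u) := hu.continuous_fderiv one_ne_zero
  have hint₁ : ∀ i, Integrable (fun x => c i (u x) • fderiv ℝ φ x (b i)) μ := fun i =>
    ((hcu i).continuous.smul (hφ'.clm_apply continuous_const)).integrable_of_hasCompactSupport
      (hφc.fderiv_apply ℝ (b i)).smul_left
  have hint₂ : ∀ i, Integrable (fun x => c i (fderiv ℝ u x (b i)) • φ x) μ := fun i =>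
    (((c i).continuous.comp (hu'.clm_apply continuous_const)).smul
      hφ.continuous).integrable_of_hasCompactSupport hφc.smul_left
  have ibp : ∀ i, ∫ x, c i (u x) • fderiv ℝ φ x (b i) ∂μ =
      -∫ x, c i (fderiv ℝ u x (b i)) • φ x ∂μ := fun i => by
    simp_rw [← hfderiv_cu]
    refine integral_smul_fderiv_eq_neg_fderiv_smul_of_integrable ?_ ?_ ?_ ?_ ?_
    · simpa only [hfderiv_cu] using hint₂ i
    · exact hint₁ i
    · exact ((hcu i).continuous.smul hφ.continuous).integrable_of_hasCompactSupport hφc.smul_left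
    · exact fun x _ => (hcu i).differentiable one_ne_zero x
    · exact fun x _ => hφ.differentiable one_ne_zero x
  calc ∫ x, fderiv ℝ φ x (u x) ∂μ = ∫ x, ∑ i, c i (u x) • fderiv ℝ φ x (b i) ∂μ := by
        congr 1; ext x
        conv_lhs => rw [← b.sum_repr (u x), map_sum]
        simp only [map_smul, hc]
    _ = ∑ i, -∫ x, c i (fderiv ℝ u x (b i)) • φ x ∂μ := by
        rw [integral_finsetSum _ fun i _ => hint₁ i]
        exact Finset.sum_congr rfl fun i _ => ibp i
    _ = -∫ x, LinearMap.trace ℝ E (fderiv ℝ u x : E →ₗ[ℝ] E) • φ x ∂μ := by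
        rw [Finset.sum_neg_distrib, ← integral_finsetSum _ fun i _ => hint₂ i]
        simp_rw [LinearMap.trace_eq_sum_repr b, Finset.sum_smul, hc]
        rfl

section Slices

variable {E F : Type*} [NormedAddCommGroup E] [NormedSpace ℝ E] [NormedAddCommGroup F]
  [NormedSpace ℝ F] {Φ : ℝ → E → F} {s : Set ℝ}

theorem ContDiffOn.contDiff_slice {n : WithTop ℕ∞}
    (hΦ : ContDiffOn ℝ n (fun p : ℝ × E => Φ p.1 p.2) (s ×ˢ univ)) {t : ℝ} (ht : t ∈ s) :
    ContDiff ℝ n (Φ t) :=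
  hΦ.comp_contDiff (contDiff_const.prodMk contDiff_id) fun x => ⟨ht, mem_univ x⟩

theorem ContDiffOn.hasDerivAt_slice (hΦ : ContDiffOn ℝ 1 (fun p : ℝ × E => Φ p.1 p.2) (s ×ˢ univ))
    (hs : IsOpen s) {t : ℝ} (ht : t ∈ s) (x : E) :
    HasDerivAt (Φ · x) (fderiv ℝ (fun p : ℝ × E => Φ p.1 p.2) (t, x) (1, 0)) t :=
  (((hΦ.contDiffAt ((hs.prod isOpen_univ).mem_nhds ⟨ht, mem_univ x⟩)).differentiableAt
    one_ne_zero).hasFDerivAt).comp_hasDerivAt t ((hasDerivAt_id t).prodMk (hasDerivAt_const t x))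

end Slices

theorem constant_of_continuousOn_of_hasDerivAt_zero {F : Type*} [NormedAddCommGroup F]
    [NormedSpace ℝ F] {f : ℝ → F} {a b : ℝ} (hcont : ContinuousOn f (Icc a b))
    (hderiv : ∀ x ∈ Ioo a b, HasDerivAt f 0 x) : ∀ x ∈ Icc a b, f x = f a := by
  refine constant_of_has_deriv_right_zero hcont fun x hx => ?_
  obtain rfl | hax := eq_or_lt_of_le hx.1
  · have hIoo : Ioo a b ∈ 𝓝[>] a := Ioo_mem_nhdsGT hx.2
    exact hasDerivWithinAt_Ici_of_tendsto_deriv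
      (fun y hy => (hderiv y hy).differentiableAt.differentiableWithinAt)
      ((hcont a (left_mem_Icc.2 hx.2.le)).mono Ioo_subset_Icc_self) hIoo
      (tendsto_const_nhds.congr' (Filter.eventuallyEq_of_mem hIoo fun y hy =>
        (hderiv y hy).deriv.symm))
  · exact (hderiv x ⟨hax, hx.2⟩).hasDerivWithinAt

theorem hasDerivAt_integral_of_contDiffOn {E F : Type*} [NormedAddCommGroup E]
    [NormedSpace ℝ E] [FiniteDimensional ℝ E] [MeasurableSpace E] [OpensMeasurableSpace E]
    {μ : Measure E} [IsFiniteMeasureOnCompacts μ] [NormedAddCommGroup F] [NormedSpace ℝ F]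
    {Φ : ℝ → E → F} {U : Set ℝ} {K : Set E} (hU : IsOpen U)
    (hΦ : ContDiffOn ℝ 1 (fun p : ℝ × E => Φ p.1 p.2) (U ×ˢ univ)) (hK : IsCompact K)
    (hsupp : ∀ t ∈ U, support (Φ t) ⊆ K) {t₀ : ℝ} (ht₀ : t₀ ∈ U) :
    HasDerivAt (fun t => ∫ x, Φ t x ∂μ) (∫ x, deriv (Φ · x) t₀ ∂μ) t₀ := by
  set Φ' : ℝ → E → F := fun t x => fderiv ℝ (fun p : ℝ × E => Φ p.1 p.2) (t, x) (1, 0)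
  have hΦ'_cont : ContinuousOn (fun p : ℝ × E => Φ' p.1 p.2) (U ×ˢ univ) :=
    (hΦ.continuousOn_fderiv_of_isOpen (hU.prod isOpen_univ) le_rfl).clm_apply continuousOn_const
  have hΦ'_supp : ∀ t ∈ U, ∀ x ∉ K, Φ' t x = 0 := fun t ht x hx =>
    (hΦ.hasDerivAt_slice hU ht x).unique <| (hasDerivAt_const t (0 : F)).congr_of_eventuallyEq <|
      Filter.eventuallyEq_of_mem (hU.mem_nhds ht) fun s hs =>
        notMem_support.1 fun h => hx (hsupp s hs h)
  obtain ⟨ε, hε, hball⟩ := Metric.nhds_basis_closedBall.mem_iff.1 (hU.mem_nhds ht₀)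
  obtain ⟨C, hC⟩ := ((isCompact_closedBall t₀ ε).prod hK).exists_bound_of_continuousOn
    (hΦ'_cont.mono (prod_mono hball (subset_univ K)))
  have hslice : ∀ t ∈ U, Continuous (Φ t) := fun t ht => (hΦ.contDiff_slice ht).continuous
  have key := hasDerivAt_integral_of_dominated_loc_of_deriv_le (μ := μ) (F' := Φ')
    (bound := K.indicator fun _ => C) (Metric.ball_mem_nhds t₀ hε)
    (Filter.eventually_of_mem (hU.mem_nhds ht₀) fun t ht => (hslice t ht).aestronglyMeasurable)
    ((hslice t₀ ht₀).integrable_of_hasCompactSupport (HasCompactSupport.intro hK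
      fun x hx => notMem_support.1 fun h => hx (hsupp t₀ ht₀ h)))
    ((hΦ'_cont.comp_continuous (continuous_const.prodMk continuous_id)
      fun x => ⟨ht₀, mem_univ x⟩).aestronglyMeasurable)
    (Filter.Eventually.of_forall fun x t ht => by
      have htU := hball (Metric.ball_subset_closedBall ht)
      by_cases hx : x ∈ K
      · simpa [indicator_of_mem hx] using hC (t, x) ⟨Metric.ball_subset_closedBall ht, hx⟩
      · simp [indicator_of_notMem hx, hΦ'_supp t htU x hx])
    ((integrable_indicator_iff hK.measurableSet).2 (integrableOn_const hK.measure_ne_top))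
    (Filter.Eventually.of_forall fun x t ht =>
      hΦ.hasDerivAt_slice hU (hball (Metric.ball_subset_closedBall ht)) x)
  simpa only [fun x => (hΦ.hasDerivAt_slice hU ht₀ x).deriv] using key.2

theorem integral_comp_eq_of_transport {E F : Type*} [NormedAddCommGroup E] [NormedSpace ℝ E]
    [FiniteDimensional ℝ E] [MeasurableSpace E] [BorelSpace E] {μ : Measure E}
    [μ.IsAddHaarMeasure] [NormedAddCommGroup F] [NormedSpace ℝ F]
    {u : ℝ → E → E} {θ : ℝ → E → ℝ} {a b : ℝ} {K : Set E}
    (hu : ∀ t ∈ Ioo a b, ContDiff ℝ 1 (u t))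
    (hθ : ContDiffOn ℝ 1 (fun p : ℝ × E => θ p.1 p.2) (Icc a b ×ˢ univ))
    (hdiv : ∀ t ∈ Ioo a b, ∀ x, LinearMap.trace ℝ E (fderiv ℝ (u t) x : E →ₗ[ℝ] E) = 0)
    (hK : IsCompact K) (hsupp : ∀ t ∈ Icc a b, support (θ t) ⊆ K)
    (heq : ∀ t ∈ Ioo a b, ∀ x, deriv (fun s => θ s x) t + fderiv ℝ (θ t) x (u t x) = 0)
    {g : ℝ → F} (hg : ContDiff ℝ 1 g) (hg0 : g 0 = 0) :
    ∀ t ∈ Icc a b, ∫ x, g (θ t x) ∂μ = ∫ x, g (θ a x) ∂μ := by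
  have hgθ : ContDiffOn ℝ 1 (fun p : ℝ × E => g (θ p.1 p.2)) (Icc a b ×ˢ univ) :=
    hg.comp_contDiffOn hθ
  have hgθ_supp : ∀ t ∈ Icc a b, support (fun x => g (θ t x)) ⊆ K := fun t ht =>
    (support_comp_subset hg0 _).trans (hsupp t ht)
  refine constant_of_continuousOn_of_hasDerivAt_zero
    (continuousOn_integral_of_compact_support hK hgθ.continuousOn
      fun t x ht hx => notMem_support.1 fun h => hx (hgθ_supp t ht h)) fun t ht => ?_
  have hIoo : Ioo a b ⊆ Icc a b := Ioo_subset_Icc_self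
  have hθt : ContDiff ℝ 1 (θ t) := hθ.contDiff_slice (hIoo ht)
  have hgθt : ContDiff ℝ 1 (fun x => g (θ t x)) := hg.comp hθt
  have hdt : ∀ x, deriv (fun s => g (θ s x)) t = -fderiv ℝ (fun y => g (θ t y)) x (u t x) := by
    intro x
    have hθx : HasDerivAt (fun s => θ s x) (deriv (fun s => θ s x) t) t :=
      ((hθ.mono (prod_mono hIoo subset_rfl)).hasDerivAt_slice isOpen_Ioo ht
        x).differentiableAt.hasDerivAt
    have hgθx : HasDerivAt (fun s => g (θ s x)) (deriv (fun s => θ s x) t • deriv g (θ t x)) t :=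
      (hg.differentiable one_ne_zero _).hasDerivAt.scomp t hθx
    rw [hgθx.deriv, fderiv_fun_comp x (hg.differentiable one_ne_zero _)
      (hθt.differentiable one_ne_zero x)]
    simp [eq_neg_of_add_eq_zero_left (heq t ht x)]
  have h := hasDerivAt_integral_of_contDiffOn (μ := μ) isOpen_Ioo
    (hgθ.mono (prod_mono hIoo subset_rfl)) hK (fun s hs => hgθ_supp s (hIoo hs)) ht
  simp_rw [hdt, integral_neg, integral_fderiv_apply_eq_neg_integral_trace_smul hgθt
    (HasCompactSupport.intro hK fun x hx => notMem_support.1 fun h => hx (hgθ_supp t (hIoo ht) h))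
    (hu t ht), hdiv t ht, zero_smul, integral_zero, neg_zero] at h
  exact h

section Law

open Complex

variable {X : Type*} [MeasurableSpace X] {μ : Measure X} {K : Set X} {f g : X → ℝ}

-- The `- 1` makes the integrand vanish off `K`, so that it is integrable for any `μ`.
theorem charFun_map_restrict_of_support_subset (hK : μ K ≠ ∞) (hf : Measurable f)
    (hfK : support f ⊆ K) (ξ : ℝ) :
    charFun ((μ.restrict K).map f) ξ = ∫ x, (cexp (ξ * f x * I) - 1) ∂μ + μ.real K := by
  have : IsFiniteMeasure (μ.restrict K) := isFiniteMeasure_restrict.2 hK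
  have hint : Integrable (fun x => cexp (ξ * f x * I)) (μ.restrict K) :=
    (integrable_const (1 : ℝ)).mono' (by fun_prop) (Filter.Eventually.of_forall fun x => by
      rw [← ofReal_mul, norm_exp_ofReal_mul_I])
  have hvanish : ∫ x in K, (cexp (ξ * f x * I) - 1) ∂μ = ∫ x, (cexp (ξ * f x * I) - 1) ∂μ :=
    setIntegral_eq_integral_of_forall_compl_eq_zero fun x hx => by
      simp [notMem_support.1 fun h => hx (hfK h)]
  rw [charFun_apply_real, integral_map hf.aemeasurable (by fun_prop), ← hvanish,
    integral_sub hint (integrable_const 1)]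
  simp

theorem map_restrict_eq_of_integral_cexp_sub_one_eq (hK : μ K ≠ ∞) (hf : Measurable f)
    (hg : Measurable g) (hfK : support f ⊆ K) (hgK : support g ⊆ K)
    (h : ∀ ξ : ℝ, ∫ x, (cexp (ξ * f x * I) - 1) ∂μ = ∫ x, (cexp (ξ * g x * I) - 1) ∂μ) :
    (μ.restrict K).map f = (μ.restrict K).map g := by
  have : IsFiniteMeasure (μ.restrict K) := isFiniteMeasure_restrict.2 hK
  refine Measure.ext_of_charFun (funext fun ξ => ?_)
  rw [charFun_map_restrict_of_support_subset hK hf hfK,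
    charFun_map_restrict_of_support_subset hK hg hgK, h]

theorem eLpNorm_eq_of_map_restrict_eq (hf : Measurable f) (hg : Measurable g)
    (hfK : support f ⊆ K) (hgK : support g ⊆ K) (h : (μ.restrict K).map f = (μ.restrict K).map g)
    (p : ℝ≥0∞) : eLpNorm f p μ = eLpNorm g p μ := by
  have hid : ∀ ν : Measure ℝ, AEStronglyMeasurable id ν := fun _ =>
    measurable_id.aestronglyMeasurable
  rw [← eLpNorm_restrict_eq_of_support_subset hfK, ← eLpNorm_restrict_eq_of_support_subset hgK,
    ← id_comp f, ← id_comp g, ← eLpNorm_map_measure (hid _) hf.aemeasurable,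
    ← eLpNorm_map_measure (hid _) hg.aemeasurable, h]

end Law

theorem transport_Lp_nonincreasing_general (d : ℕ) (T : ℝ)
    (u : ℝ → EuclideanSpace ℝ (Fin d) → EuclideanSpace ℝ (Fin d))
    (θ : ℝ → EuclideanSpace ℝ (Fin d) → ℝ)
    (hu : ContDiffOn ℝ 1 (fun p : ℝ × EuclideanSpace ℝ (Fin d) => u p.1 p.2)
      (Icc 0 T ×ˢ univ))
    (hθ : ContDiffOn ℝ 1 (fun p : ℝ × EuclideanSpace ℝ (Fin d) => θ p.1 p.2)
      (Icc 0 T ×ˢ univ))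
    (hdiv : ∀ t ∈ Icc 0 T, ∀ x : EuclideanSpace ℝ (Fin d),
      LinearMap.trace ℝ (EuclideanSpace ℝ (Fin d))
        ((fderiv ℝ (u t) x : EuclideanSpace ℝ (Fin d) →L[ℝ] EuclideanSpace ℝ (Fin d)) :
          EuclideanSpace ℝ (Fin d) →ₗ[ℝ] EuclideanSpace ℝ (Fin d)) = 0)
    (K : Set (EuclideanSpace ℝ (Fin d))) (hK : IsCompact K)
    (hsupp : ∀ t ∈ Icc 0 T, Function.support (θ t) ⊆ K)
    (heq : ∀ t ∈ Icc 0 T, ∀ x,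
      deriv (fun s => θ s x) t + fderiv ℝ (θ t) x (u t x) = 0) :
    ∀ p : ℝ≥0∞, 1 ≤ p → ∀ t ∈ Icc 0 T,
      eLpNorm (θ t) p volume ≤ eLpNorm (θ 0) p volume := by
  intro p _ t ht
  have h0 : (0 : ℝ) ∈ Icc 0 T := left_mem_Icc.2 (ht.1.trans ht.2)
  have hIoo : Ioo (0 : ℝ) T ⊆ Icc 0 T := Ioo_subset_Icc_self
  have hmeas : ∀ s ∈ Icc 0 T, Measurable (θ s) := fun s hs =>
    (hθ.contDiff_slice hs).continuous.measurable
  refine (eLpNorm_eq_of_map_restrict_eq (hmeas t ht) (hmeas 0 h0) (hsupp t ht) (hsupp 0 h0)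
    (map_restrict_eq_of_integral_cexp_sub_one_eq hK.measure_ne_top (hmeas t ht) (hmeas 0 h0)
      (hsupp t ht) (hsupp 0 h0) fun ξ => ?_) p).le
  exact integral_comp_eq_of_transport (fun s hs => hu.contDiff_slice (hIoo hs)) hθ
    (fun s hs => hdiv s (hIoo hs)) hK hsupp (fun s hs => heq s (hIoo hs))
    (g := fun y : ℝ => Complex.exp (ξ * y * Complex.I) - 1)
    (((contDiff_const.mul Complex.ofRealCLM.contDiff).mul contDiff_const).cexp.sub contDiff_const)
    (by simp) t ht

/-- The `L^p` norms of a compactly supported scalar transported by a divergence-free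
velocity field do not increase. -/
theorem transport_Lp_nonincreasing (d : ℕ) (hd : 1 ≤ d) (T : ℝ) (hT : 0 < T)
    (u : ℝ → EuclideanSpace ℝ (Fin d) → EuclideanSpace ℝ (Fin d))
    (θ : ℝ → EuclideanSpace ℝ (Fin d) → ℝ)
    (hu : ContDiffOn ℝ 1 (fun p : ℝ × EuclideanSpace ℝ (Fin d) => u p.1 p.2)
      (Icc 0 T ×ˢ univ))
    (hθ : ContDiffOn ℝ 1 (fun p : ℝ × EuclideanSpace ℝ (Fin d) => θ p.1 p.2)
      (Icc 0 T ×ˢ univ))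
    (hdiv : ∀ t ∈ Icc 0 T, ∀ x : EuclideanSpace ℝ (Fin d),
      LinearMap.trace ℝ (EuclideanSpace ℝ (Fin d))
        ((fderiv ℝ (u t) x : EuclideanSpace ℝ (Fin d) →L[ℝ] EuclideanSpace ℝ (Fin d)) :
          EuclideanSpace ℝ (Fin d) →ₗ[ℝ] EuclideanSpace ℝ (Fin d)) = 0)
    (K : Set (EuclideanSpace ℝ (Fin d))) (hK : IsCompact K)
    (hsupp : ∀ t ∈ Icc 0 T, Function.support (θ t) ⊆ K)
    (heq : ∀ t ∈ Icc 0 T, ∀ x,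
      deriv (fun s => θ s x) t + fderiv ℝ (θ t) x (u t x) = 0) :
    ∀ p : ℝ≥0∞, 1 ≤ p → ∀ t ∈ Icc 0 T,
      eLpNorm (θ t) p volume ≤ eLpNorm (θ 0) p volume :=
  transport_Lp_nonincreasing_general d T u θ hu hθ hdiv K hK hsupp heq
end

section
/- (Osgood lemma, positive initial bound.) Let γ : [0,∞) → [0,∞) be measurable and integrable on every bounded interval, let μ : [0,∞) → [0,∞) be continuous and non-decreasing with μ(r) > 0 for r > 0, let a > 0, and let α : [0,∞) → [0,∞) be measurable such that t ↦ γ(t)·μ(α(t)) is integrable on every bounded interval and α(t) ≤ a + ∫_0^t γ(τ)·μ(α(τ)) dτ for all t ≥ 0. Then for every t ≥ 0 with α(t) > 0, one has M(a) − M(α(t)) ≤ ∫_0^t γ(τ) dτ, where M(x) := ∫_x^1 dr/μ(r). -/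
/-!
Put `φ t = a + ∫₀ᵗ γ μ(α)` and `F x = ∫ₐˣ dr / μ r`, so that `M a - M x = F x`. The function `φ`
is absolutely continuous with `φ' = γ μ(α) ≤ γ μ(φ)` almost everywhere, and `F` is Lipschitz on
`[a, ∞)` because `1 / μ ≤ 1 / μ a` there. Hence `F ∘ φ` is absolutely continuous with
`(F ∘ φ)' = φ' / μ(φ) ≤ γ` almost everywhere, and integrating gives `F (φ t) ≤ ∫₀ᵗ γ`. Since
`α ≤ φ` and `F` is increasing, `F (α t) ≤ F (φ t)`.
-/

open MeasureTheory Set intervalIntegral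

theorem LipschitzOnWith.comp_absolutelyContinuousOnInterval {X Y : Type*} [PseudoMetricSpace X]
    [PseudoMetricSpace Y] {g : X → Y} {K : NNReal} {s : Set X} (hg : LipschitzOnWith K g s)
    {f : ℝ → X} {a b : ℝ} (hf : AbsolutelyContinuousOnInterval f a b)
    (hfs : MapsTo f (uIcc a b) s) : AbsolutelyContinuousOnInterval (g ∘ f) a b := by
  rw [absolutelyContinuousOnInterval_iff] at hf ⊢
  intro ε hε
  obtain ⟨δ, hδ, hfδ⟩ := hf (ε / (K + 1)) (by positivity)
  refine ⟨δ, hδ, fun E hE hEδ => ?_⟩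
  calc ∑ i ∈ Finset.range E.1, dist ((g ∘ f) (E.2 i).1) ((g ∘ f) (E.2 i).2)
      ≤ ∑ i ∈ Finset.range E.1, K * dist (f (E.2 i).1) (f (E.2 i).2) :=
        Finset.sum_le_sum fun i hi => hg.dist_le_mul _ (hfs (hE.1 i hi).1) _ (hfs (hE.1 i hi).2)
    _ = K * ∑ i ∈ Finset.range E.1, dist (f (E.2 i).1) (f (E.2 i).2) := (Finset.mul_sum ..).symm
    _ ≤ K * (ε / (K + 1)) := by gcongr; exact (hfδ E hE hEδ).le
    _ < ε := by rw [mul_div_assoc', div_lt_iff₀ (by positivity)]; linarith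

theorem lipschitzOnWith_integral_of_norm_le {E : Type*} [NormedAddCommGroup E] [NormedSpace ℝ E]
    {f : ℝ → E} {a : ℝ} {s : Set ℝ} {C : NNReal} (hs : s.OrdConnected)
    (hf : ∀ x ∈ s, IntervalIntegrable f volume a x) (hC : ∀ x ∈ s, ‖f x‖ ≤ C) :
    LipschitzOnWith C (fun x => ∫ t in a..x, f t) s := by
  refine LipschitzOnWith.of_dist_le_mul fun x hx y hy => ?_
  rw [dist_eq_norm, integral_interval_sub_left (hf x hx) (hf y hy), Real.dist_eq]
  exact norm_integral_le_of_norm_le_const fun r hr =>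
    hC r (hs.uIcc_subset hy hx (uIoc_subset_uIcc hr))

section InverseIntegral

variable {μ : ℝ → ℝ}

theorem continuousOn_inv_of_pos (hμcont : ContinuousOn μ (Ioi 0))
    (hμpos : ∀ r, 0 < r → 0 < μ r) : ContinuousOn (fun r => (μ r)⁻¹) (Ioi 0) :=
  hμcont.inv₀ fun r hr => (hμpos r hr).ne'

theorem intervalIntegrable_inv_of_pos (hμcont : ContinuousOn μ (Ioi 0))
    (hμpos : ∀ r, 0 < r → 0 < μ r) {x y : ℝ} (hx : 0 < x) (hy : 0 < y) :
    IntervalIntegrable (fun r => (μ r)⁻¹) volume x y :=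
  ((continuousOn_inv_of_pos hμcont hμpos).mono
    (ordConnected_Ioi.uIcc_subset hx hy)).intervalIntegrable

theorem hasDerivAt_integral_inv (hμcont : ContinuousOn μ (Ioi 0))
    (hμpos : ∀ r, 0 < r → 0 < μ r) {a x : ℝ} (ha : 0 < a) (hx : 0 < x) :
    HasDerivAt (fun y => ∫ r in a..y, (μ r)⁻¹) (μ x)⁻¹ x :=
  integral_hasDerivAt_right (intervalIntegrable_inv_of_pos hμcont hμpos ha hx)
    ((continuousOn_inv_of_pos hμcont hμpos).stronglyMeasurableAtFilter isOpen_Ioi x hx)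
    ((continuousOn_inv_of_pos hμcont hμpos).continuousAt (Ioi_mem_nhds hx))

theorem monotoneOn_integral_inv (hμcont : ContinuousOn μ (Ioi 0))
    (hμpos : ∀ r, 0 < r → 0 < μ r) {a : ℝ} (ha : 0 < a) :
    MonotoneOn (fun x => ∫ r in a..x, (μ r)⁻¹) (Ioi 0) := by
  intro x hx y hy hxy
  dsimp only
  rw [← sub_nonneg, integral_interval_sub_left (intervalIntegrable_inv_of_pos hμcont hμpos ha hy)
    (intervalIntegrable_inv_of_pos hμcont hμpos ha hx)]
  exact integral_nonneg hxy fun r hr => inv_nonneg.2 (hμpos r (hx.trans_le hr.1)).le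

theorem integral_inv_le_integral_of_le_mul (hμcont : ContinuousOn μ (Ioi 0))
    (hμpos : ∀ r, 0 < r → 0 < μ r) {γ g : ℝ → ℝ} {a t : ℝ} (ha : 0 < a) (ht : 0 ≤ t)
    (hμmono : MonotoneOn μ (Ici a))
    (hg : IntervalIntegrable g volume 0 t) (hγ : IntervalIntegrable γ volume 0 t)
    (hg_nonneg : ∀ τ ∈ Icc 0 t, 0 ≤ g τ)
    (hg_le : ∀ τ ∈ Icc 0 t, g τ ≤ γ τ * μ (a + ∫ s in 0..τ, g s)) :
    ∫ r in a..(a + ∫ τ in 0..t, g τ), (μ r)⁻¹ ≤ ∫ τ in 0..t, γ τ := by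
  set φ : ℝ → ℝ := fun τ => a + ∫ s in 0..τ, g s
  set F : ℝ → ℝ := fun x => ∫ r in a..x, (μ r)⁻¹
  have hφ_ge : ∀ τ ∈ Icc 0 t, a ≤ φ τ := fun τ hτ =>
    le_add_of_nonneg_right <| integral_nonneg hτ.1 fun s hs => hg_nonneg s ⟨hs.1, hs.2.trans hτ.2⟩
  have hφ_ac : AbsolutelyContinuousOnInterval φ 0 t :=
    (LipschitzWith.const a).lipschitzOnWith.absolutelyContinuousOnInterval.fun_add
      (hg.absolutelyContinuousOnInterval_intervalIntegral left_mem_uIcc)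
  have hF_lip : LipschitzOnWith (μ a)⁻¹.toNNReal F (Ici a) := by
    refine lipschitzOnWith_integral_of_norm_le ordConnected_Ici
      (fun x hx => intervalIntegrable_inv_of_pos hμcont hμpos ha (ha.trans_le hx)) fun r hr => ?_
    rw [Real.coe_toNNReal _ (inv_nonneg.2 (hμpos a ha).le), Real.norm_eq_abs,
      abs_of_pos (inv_pos.2 (hμpos r (ha.trans_le hr)))]
    exact inv_anti₀ (hμpos a ha) (hμmono self_mem_Ici hr hr)
  have hFφ_ac : AbsolutelyContinuousOnInterval (F ∘ φ) 0 t :=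
    hF_lip.comp_absolutelyContinuousOnInterval hφ_ac fun τ hτ =>
      hφ_ge τ (by rwa [uIcc_of_le ht] at hτ)
  have hderiv_le : ∀ᵐ τ, τ ∈ Icc 0 t → deriv (F ∘ φ) τ ≤ γ τ := by
    filter_upwards [hg.ae_hasDerivAt_integral] with τ hτ hτt
    rw [uIcc_of_le ht] at hτ
    have hφτ : 0 < μ (φ τ) := hμpos _ (ha.trans_le (hφ_ge τ hτt))
    rw [((hasDerivAt_integral_inv hμcont hμpos ha (ha.trans_le (hφ_ge τ hτt))).comp τ
      ((hτ hτt 0 ⟨le_rfl, ht⟩).const_add a)).deriv, inv_mul_le_iff₀ hφτ, mul_comm]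
    exact hg_le τ hτt
  calc F (φ t) = F (φ t) - F (φ 0) := by simp [F, φ]
    _ = ∫ τ in 0..t, deriv (F ∘ φ) τ := hFφ_ac.integral_deriv_eq_sub.symm
    _ ≤ ∫ τ in 0..t, γ τ := integral_mono_ae_restrict ht hFφ_ac.intervalIntegrable_deriv hγ
      ((ae_restrict_iff' measurableSet_Icc).2 hderiv_le)

end InverseIntegral

theorem osgood_lemma_pos_general (γ μ α : ℝ → ℝ) (a : ℝ) (ha : 0 < a)
    (hγnn : ∀ t, 0 ≤ t → 0 ≤ γ t)
    (hγint : ∀ T, 0 < T → IntegrableOn γ (Icc 0 T))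
    (hμcont : ContinuousOn μ (Ici 0)) (hμmono : MonotoneOn μ (Ici 0))
    (hμnn : ∀ r, 0 ≤ r → 0 ≤ μ r)
    (hμpos : ∀ r, 0 < r → 0 < μ r)
    (hαnn : ∀ t, 0 ≤ t → 0 ≤ α t)
    (hint : ∀ T, 0 < T → IntegrableOn (fun t => γ t * μ (α t)) (Icc 0 T))
    (hineq : ∀ t, 0 ≤ t → α t ≤ a + ∫ τ in (0:ℝ)..t, γ τ * μ (α τ)) :
    ∀ t, 0 ≤ t → 0 < α t →
      (∫ r in a..(1:ℝ), (μ r)⁻¹) - (∫ r in (α t)..(1:ℝ), (μ r)⁻¹)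
        ≤ ∫ τ in (0:ℝ)..t, γ τ := by
  intro t ht hαt
  have hμcont' : ContinuousOn μ (Ioi 0) := hμcont.mono Ioi_subset_Ici_self
  have hinv {x y : ℝ} (hx : 0 < x) (hy : 0 < y) := intervalIntegrable_inv_of_pos hμcont' hμpos hx hy
  have hinterval {f : ℝ → ℝ} (hf : ∀ T, 0 < T → IntegrableOn f (Icc 0 T)) :
      IntervalIntegrable f volume 0 t :=
    (intervalIntegrable_iff_integrableOn_Icc_of_le ht).2 <|
      (hf (t + 1) (by linarith)).mono_set
        (Icc_subset_Icc_right (le_add_of_nonneg_right zero_le_one))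
  have hα_le := hineq t ht
  calc (∫ r in a..(1:ℝ), (μ r)⁻¹) - (∫ r in (α t)..(1:ℝ), (μ r)⁻¹)
      = ∫ r in a..α t, (μ r)⁻¹ := by
        rw [integral_interval_sub_interval_comm (hinv ha one_pos) (hinv hαt one_pos) (hinv ha hαt),
          integral_same, sub_zero]
    _ ≤ ∫ r in a..(a + ∫ τ in (0:ℝ)..t, γ τ * μ (α τ)), (μ r)⁻¹ :=
        monotoneOn_integral_inv hμcont' hμpos ha hαt (hαt.trans_le hα_le) hα_le
    _ ≤ ∫ τ in (0:ℝ)..t, γ τ :=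
        integral_inv_le_integral_of_le_mul hμcont' hμpos ha ht
          (hμmono.mono (Ici_subset_Ici.2 ha.le)) (hinterval hint) (hinterval hγint)
          (fun τ hτ => mul_nonneg (hγnn τ hτ.1) (hμnn _ (hαnn τ hτ.1)))
          fun τ hτ => mul_le_mul_of_nonneg_left (hμmono (hαnn τ hτ.1)
            ((hαnn τ hτ.1).trans (hineq τ hτ.1)) (hineq τ hτ.1)) (hγnn τ hτ.1)

/-- Osgood lemma, case of a positive initial bound `a > 0`:
`M(a) - M(α t) ≤ ∫_0^t γ`, where `M x = ∫_x^1 dr / μ r`. -/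
theorem osgood_lemma_pos (γ μ α : ℝ → ℝ) (a : ℝ) (ha : 0 < a)
    (hγnn : ∀ t, 0 ≤ t → 0 ≤ γ t)
    (hγint : ∀ T, 0 < T → IntegrableOn γ (Icc 0 T))
    (hμcont : ContinuousOn μ (Ici 0)) (hμmono : MonotoneOn μ (Ici 0))
    (hμnn : ∀ r, 0 ≤ r → 0 ≤ μ r)
    (hμpos : ∀ r, 0 < r → 0 < μ r)
    (hα : Measurable α) (hαnn : ∀ t, 0 ≤ t → 0 ≤ α t)
    (hint : ∀ T, 0 < T → IntegrableOn (fun t => γ t * μ (α t)) (Icc 0 T))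
    (hineq : ∀ t, 0 ≤ t → α t ≤ a + ∫ τ in (0:ℝ)..t, γ τ * μ (α τ)) :
    ∀ t, 0 ≤ t → 0 < α t →
      (∫ r in a..(1:ℝ), (μ r)⁻¹) - (∫ r in (α t)..(1:ℝ), (μ r)⁻¹)
        ≤ ∫ τ in (0:ℝ)..t, γ τ :=
  osgood_lemma_pos_general γ μ α a ha hγnn hγint hμcont hμmono hμnn hμpos hαnn hint hineq
end

section
/- Let μ(x) := x·log(e + 1/x) for x > 0 and μ(0) := 0. Fix T > 0 and a nonnegative function γ integrable on [0,T]. Then for every ε > 0 there exists δ > 0 such that: for every a with 0 < a ≤ δ and every measurable α : [0,T] → [0,∞) with t ↦ γ(t)·μ(α(t)) integrable on [0,T] and α(t) ≤ a + ∫_0^t γ(τ)·μ(α(τ)) dτ for all t ∈ [0,T], one has α(t) ≤ ε for all t ∈ [0,T]. In other words, the bound furnished by the Osgood lemma with this modulus tends to 0 uniformly on [0,T] as the initial bound a tends to 0. -/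
/-!
On `[0, 1]` the modulus `μ x = x log (e + 1/x)` is dominated by `x (2 - log x)`, whose Osgood
potential is explicit: `d/dx log (2 - log x) = -1 / (x (2 - log x))`. Along
`Φ t = a + ∫₀ᵗ γ μ(α)`, which dominates `α`, the quantity `log (2 - log (Φ t)) + 2 ∫₀ᵗ γ` is
nondecreasing as long as `Φ ≤ 1`. Hence `2 - log (Φ t) ≥ (2 - log a) e^{-2 ∫γ}`, which pushes `Φ t`
below any `ε < 1` once `a` is small; by continuity `Φ` then never reaches `1` on `[0, T]`.
-/

open MeasureTheory Set Real Filter Topology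

noncomputable def osgoodModulus (x : ℝ) : ℝ := x * log (exp 1 + x⁻¹)

theorem osgoodModulus_nonneg {x : ℝ} (hx : 0 ≤ x) : 0 ≤ osgoodModulus x :=
  mul_nonneg hx (log_nonneg (by linarith [inv_nonneg.2 hx, add_one_le_exp (1 : ℝ)]))

theorem osgoodModulus_le_mul_two_sub_log {x : ℝ} (hx0 : 0 ≤ x) (hx1 : x ≤ 1) :
    osgoodModulus x ≤ x * (2 - log x) := by
  rcases hx0.eq_or_lt with rfl | hx
  · simp [osgoodModulus]
  refine mul_le_mul_of_nonneg_left ?_ hx0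
  have he : 2 < exp 1 := lt_trans (by norm_num) exp_one_gt_d9
  have hle : exp 1 + x⁻¹ ≤ exp 2 / x := by
    rw [le_div_iff₀ hx, add_mul, inv_mul_cancel₀ hx.ne', show (2 : ℝ) = 1 + 1 by norm_num,
      exp_add]
    nlinarith
  calc log (exp 1 + x⁻¹) ≤ log (exp 2 / x) := log_le_log (by positivity) hle
    _ = 2 - log x := by rw [log_div (exp_pos 2).ne' hx.ne', log_exp]

theorem monotoneOn_mul_two_sub_log : MonotoneOn (fun x : ℝ => x * (2 - log x)) (Icc 0 1) := by
  have hcont : Continuous fun x : ℝ => x * (2 - log x) :=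
    ((continuous_id.const_mul 2).sub continuous_mul_log).congr fun x => by
      simp only [Pi.sub_apply, id]
      ring
  refine monotoneOn_of_hasDerivWithinAt_nonneg (convex_Icc 0 1) hcont.continuousOn
    (f' := fun x => 1 - log x) (fun x hx => ?_) (fun x hx => ?_)
  · rw [interior_Icc] at hx
    have : HasDerivAt (fun x : ℝ => x * (2 - log x)) (1 * (2 - log x) + x * (0 - x⁻¹)) x :=
      (hasDerivAt_id x).mul ((hasDerivAt_const x 2).sub (hasDerivAt_log hx.1.ne'))
    refine this.hasDerivWithinAt.congr_deriv ?_
    rw [zero_sub, mul_neg, mul_inv_cancel₀ hx.1.ne']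
    ring
  · rw [interior_Icc] at hx
    linarith [log_nonpos hx.1.le hx.2.le]

/-- The discrete form of `d/dx log (2 - log x) = -1 / (x (2 - log x))`, valid for steps with
`y ≤ 2 x`. -/
theorem log_two_sub_log_sub_le_of_sub_le {x y I : ℝ} (hx : 0 < x) (hxy : x ≤ y) (hy1 : y ≤ 1)
    (hy2 : y ≤ 2 * x) (h : y - x ≤ I * (y * (2 - log y))) :
    log (2 - log x) - log (2 - log y) ≤ 2 * I := by
  have hy : 0 < y := hx.trans_le hxy
  have hLy : 0 < 2 - log y := by linarith [log_nonpos hy.le hy1]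
  have hLx : 0 < 2 - log x := by linarith [log_nonpos hx.le (hxy.trans hy1)]
  have hI : 0 ≤ I * (2 - log y) :=
    le_of_mul_le_mul_right (by nlinarith : 0 * y ≤ I * (2 - log y) * y) hy
  calc log (2 - log x) - log (2 - log y) = log ((2 - log x) / (2 - log y)) :=
        (log_div hLx.ne' hLy.ne').symm
    _ ≤ (2 - log x) / (2 - log y) - 1 := log_le_sub_one_of_pos (by positivity)
    _ = log (y / x) / (2 - log y) := by
        rw [log_div hy.ne' hx.ne']
        field_simp
        ring
    _ ≤ (y / x - 1) / (2 - log y) := by gcongr; exact log_le_sub_one_of_pos (by positivity)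
    _ ≤ 2 * I := by
        rw [div_le_iff₀ hLy, div_sub_one hx.ne', div_le_iff₀ hx]
        nlinarith

theorem log_two_sub_log_sub_le_of_increments {φ g : ℝ → ℝ} {p q : ℝ} (hpq : p ≤ q)
    (hφc : ContinuousOn φ (Icc p q)) (hφm : MonotoneOn φ (Icc p q)) (hφp : 0 < φ p)
    (hφq : φ q ≤ 1) (hgc : ContinuousOn g (Icc p q))
    (hinc : ∀ s ∈ Icc p q, ∀ s' ∈ Icc p q, s ≤ s' →
      φ s' - φ s ≤ (g s' - g s) * (φ s' * (2 - log (φ s')))) :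
    log (2 - log (φ p)) - log (2 - log (φ q)) ≤ 2 * (g q - g p) := by
  set h : ℝ → ℝ := fun s => 2 * g s + log (2 - log (φ s))
  have hpos : ∀ s ∈ Icc p q, 0 < φ s := fun s hs =>
    hφp.trans_le (hφm (left_mem_Icc.2 hpq) hs hs.1)
  have hle1 : ∀ s ∈ Icc p q, φ s ≤ 1 := fun s hs =>
    (hφm hs (right_mem_Icc.2 hpq) hs.2).trans hφq
  have hhc : ContinuousOn h (Icc p q) := by
    refine (continuousOn_const.mul hgc).add
      ((continuousOn_const.sub (hφc.log fun s hs => (hpos s hs).ne')).log fun s hs => ?_)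
    show 2 - log (φ s) ≠ 0
    linarith [log_nonpos (hpos s hs).le (hle1 s hs)]
  -- continuous induction on `{s | h p ≤ h s}`; the step lemma applies to the right of `x`
  -- as long as `φ` has not doubled, which holds near `x` by continuity
  suffices Icc p q ⊆ h ⁻¹' Ici (h p) by
    have := this (right_mem_Icc.2 hpq)
    simp only [h, mem_preimage, mem_Ici] at this
    linarith
  refine IsClosed.Icc_subset_of_forall_mem_nhdsWithin ?_ (show h p ≤ h p from le_rfl) ?_
  · rw [inter_comm]
    exact hhc.preimage_isClosed_of_isClosed isClosed_Icc isClosed_Ici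
  rintro x ⟨hx, hxI⟩
  have hxIcc : x ∈ Icc p q := Ico_subset_Icc_self hxI
  have hnhds : Icc p q ∈ 𝓝[>] x := Icc_mem_nhdsGT_of_mem hxI
  have hdouble : ∀ᶠ y in 𝓝[>] x, φ y < 2 * φ x :=
    ((hφc x hxIcc).mono_of_mem_nhdsWithin hnhds).tendsto.eventually_lt_const
      (by linarith [hpos x hxIcc])
  filter_upwards [hnhds, hdouble, self_mem_nhdsWithin] with y hy hy2 hxy
  have := log_two_sub_log_sub_le_of_sub_le (hpos x hxIcc) (hφm hxIcc hy (le_of_lt hxy))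
    (hle1 y hy) hy2.le (hinc x hxIcc y hy (le_of_lt hxy))
  simp only [h, mem_preimage, mem_Ici] at hx ⊢
  linarith

theorem le_of_log_two_sub_log_sub_le {a y ε K : ℝ} (ha : 0 < a) (hay : a ≤ y) (hy1 : y ≤ 1)
    (hε : 0 < ε) (haε : a ≤ exp (2 - (2 - log ε) * exp K))
    (h : log (2 - log a) - log (2 - log y) ≤ K) : y ≤ ε := by
  have hy : 0 < y := ha.trans_le hay
  have hLy : 0 < 2 - log y := by linarith [log_nonpos hy.le hy1]
  have hLa : 0 < 2 - log a := by linarith [log_nonpos ha.le (hay.trans hy1)]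
  have hεa : 2 - log ε ≤ (2 - log a) * exp (-K) :=
    calc 2 - log ε = (2 - log ε) * exp K * exp (-K) := by
          rw [mul_assoc, ← exp_add, add_neg_cancel, exp_zero, mul_one]
      _ ≤ (2 - log a) * exp (-K) := by
          gcongr
          linarith [(log_le_iff_le_exp ha).2 haε]
  have hLay : (2 - log a) * exp (-K) ≤ 2 - log y :=
    calc (2 - log a) * exp (-K) = exp (log (2 - log a) - K) := by
          rw [exp_sub, exp_log hLa, exp_neg, div_eq_mul_inv]
      _ ≤ exp (log (2 - log y)) := exp_le_exp.2 (by linarith)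
      _ = 2 - log y := exp_log hLy
  exact (log_le_log_iff hy hε).1 (by linarith)

theorem monotoneOn_integral_of_nonneg {f : ℝ → ℝ} {p q : ℝ} (hf0 : ∀ t ∈ Icc p q, 0 ≤ f t)
    (hf : IntegrableOn f (Icc p q)) : MonotoneOn (fun t => ∫ τ in p..t, f τ) (Icc p q) :=
  fun _ hu _ hv huv => intervalIntegral.integral_mono_interval le_rfl hu.1 huv
    ((ae_restrict_iff' measurableSet_Ioc).2 <| ae_of_all _ fun τ hτ =>
      hf0 τ ⟨hτ.1.le, hτ.2.trans hv.2⟩)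
    (hf.mono_set (uIcc_subset_Icc (left_mem_Icc.2 (hu.1.trans hu.2)) hv)).intervalIntegrable

theorem continuousOn_integral {f : ℝ → ℝ} {p q : ℝ} (hf : IntegrableOn f (Icc p q)) :
    ContinuousOn (fun t => ∫ τ in p..t, f τ) (Icc p q) :=
  (intervalIntegral.continuousOn_primitive hf).congr fun _ ht =>
    intervalIntegral.integral_of_le ht.1

theorem integral_mul_osgoodModulus_le {γ α : ℝ → ℝ} {s s' b : ℝ} (hss' : s ≤ s')
    (hγ : ∀ τ ∈ Icc s s', 0 ≤ γ τ) (hγi : IntervalIntegrable γ volume s s')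
    (hF : IntervalIntegrable (fun τ => γ τ * osgoodModulus (α τ)) volume s s')
    (hα0 : ∀ τ ∈ Icc s s', 0 ≤ α τ) (hαb : ∀ τ ∈ Icc s s', α τ ≤ b) (hb : b ≤ 1) :
    ∫ τ in s..s', γ τ * osgoodModulus (α τ) ≤ (∫ τ in s..s', γ τ) * (b * (2 - log b)) := by
  rw [← intervalIntegral.integral_mul_const]
  refine intervalIntegral.integral_mono_on hss' hF (hγi.mul_const _) fun τ hτ => ?_
  refine mul_le_mul_of_nonneg_left ?_ (hγ τ hτ)
  have hα1 : α τ ≤ 1 := (hαb τ hτ).trans hb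
  calc osgoodModulus (α τ) ≤ α τ * (2 - log (α τ)) :=
        osgoodModulus_le_mul_two_sub_log (hα0 τ hτ) hα1
    _ ≤ b * (2 - log b) :=
        monotoneOn_mul_two_sub_log ⟨hα0 τ hτ, hα1⟩ ⟨(hα0 τ hτ).trans (hαb τ hτ), hb⟩ (hαb τ hτ)

theorem log_two_sub_log_sub_le_integral {γ α : ℝ → ℝ} {a T s : ℝ} (ha : 0 < a)
    (hγ : ∀ t ∈ Icc 0 T, 0 ≤ γ t) (hγi : IntegrableOn γ (Icc 0 T))
    (hα : ∀ t ∈ Icc 0 T, 0 ≤ α t)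
    (hF : IntegrableOn (fun t => γ t * osgoodModulus (α t)) (Icc 0 T))
    (hαle : ∀ t ∈ Icc 0 T, α t ≤ a + ∫ τ in 0..t, γ τ * osgoodModulus (α τ))
    (hs : s ∈ Icc 0 T) (hs1 : a + ∫ τ in 0..s, γ τ * osgoodModulus (α τ) ≤ 1) :
    log (2 - log a) - log (2 - log (a + ∫ τ in 0..s, γ τ * osgoodModulus (α τ))) ≤
      2 * ∫ τ in 0..s, γ τ := by
  set Φ : ℝ → ℝ := fun t => a + ∫ τ in 0..t, γ τ * osgoodModulus (α τ)
  have hF0 : ∀ t ∈ Icc 0 T, 0 ≤ γ t * osgoodModulus (α t) := fun t ht =>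
    mul_nonneg (hγ t ht) (osgoodModulus_nonneg (hα t ht))
  have hΦm : MonotoneOn Φ (Icc 0 T) := fun u hu v hv huv =>
    (add_le_add_iff_left a).2 (monotoneOn_integral_of_nonneg hF0 hF hu hv huv)
  have hsub : Icc 0 s ⊆ Icc 0 T := Icc_subset_Icc_right hs.2
  have h0 : (0 : ℝ) ∈ Icc 0 T := left_mem_Icc.2 (hs.1.trans hs.2)
  have key := log_two_sub_log_sub_le_of_increments (φ := Φ) (g := fun t => ∫ τ in 0..t, γ τ)
    hs.1    ((continuousOn_const.add (continuousOn_integral hF)).mono hsub) (hΦm.mono hsub)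
    (by simpa [Φ] using ha) hs1 ((continuousOn_integral hγi).mono hsub) fun u hu v hv huv => ?_
  · simpa [Φ] using key
  have hu' := hsub hu
  have hv' := hsub hv
  have hΦv : Φ v - Φ u = ∫ τ in u..v, γ τ * osgoodModulus (α τ) := by
    simp only [Φ, add_sub_add_left_eq_sub]
    exact intervalIntegral.integral_interval_sub_left
      (hF.mono_set (uIcc_subset_Icc h0 hv')).intervalIntegrable
      (hF.mono_set (uIcc_subset_Icc h0 hu')).intervalIntegrable
  rw [hΦv, intervalIntegral.integral_interval_sub_left
    (hγi.mono_set (uIcc_subset_Icc h0 hv')).intervalIntegrable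
    (hγi.mono_set (uIcc_subset_Icc h0 hu')).intervalIntegrable]
  have hτ : ∀ τ ∈ Icc u v, τ ∈ Icc 0 T := fun τ hτ => ⟨hu'.1.trans hτ.1, hτ.2.trans hv'.2⟩
  exact integral_mul_osgoodModulus_le huv (fun τ h => hγ τ (hτ τ h))
    (hγi.mono_set (uIcc_subset_Icc hu' hv')).intervalIntegrable
    (hF.mono_set (uIcc_subset_Icc hu' hv')).intervalIntegrable (fun τ h => hα τ (hτ τ h))
    (fun τ h => (hαle τ (hτ τ h)).trans (hΦm (hτ τ h) hv' h.2))
    ((hΦm hv' (hsub (right_mem_Icc.2 hs.1)) hv.2).trans hs1)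

theorem osgood_uniform_smallness_general (T : ℝ) (γ : ℝ → ℝ)
    (hγnn : ∀ t ∈ Icc 0 T, 0 ≤ γ t)
    (hγint : IntegrableOn γ (Icc 0 T)) :
    ∀ ε > 0, ∃ δ > 0, ∀ a : ℝ, 0 < a → a ≤ δ →
      ∀ α : ℝ → ℝ, Measurable α → (∀ t ∈ Icc 0 T, 0 ≤ α t) →
        IntegrableOn (fun t => γ t * (α t * Real.log (Real.exp 1 + (α t)⁻¹))) (Icc 0 T) →
        (∀ t ∈ Icc 0 T,
          α t ≤ a + ∫ τ in (0:ℝ)..t, γ τ * (α τ * Real.log (Real.exp 1 + (α τ)⁻¹))) →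
        ∀ t ∈ Icc 0 T, α t ≤ ε := by
  intro ε hε
  set ε' := min ε (1 / 2)
  set G := ∫ τ in (0 : ℝ)..T, γ τ
  refine ⟨min 1 (exp (2 - (2 - log ε') * exp (2 * G))), by positivity, ?_⟩
  intro a ha haδ α _ hα hF hαle
  set Φ : ℝ → ℝ := fun t => a + ∫ τ in (0 : ℝ)..t, γ τ * osgoodModulus (α τ)
  have hΦa : ∀ t ∈ Icc 0 T, a ≤ Φ t := fun t ht =>
    le_add_of_nonneg_right <| intervalIntegral.integral_nonneg ht.1 fun u hu =>
      have hu' : u ∈ Icc 0 T := ⟨hu.1, hu.2.trans ht.2⟩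
      mul_nonneg (hγnn u hu') (osgoodModulus_nonneg (hα u hu'))
  have hΦ_small : ∀ s ∈ Icc 0 T, Φ s ≤ 1 → Φ s ≤ ε' := fun s hs hs1 =>
    le_of_log_two_sub_log_sub_le ha (hΦa s hs) hs1 (lt_min hε one_half_pos)
      (haδ.trans (min_le_right _ _))
      ((log_two_sub_log_sub_le_integral ha hγnn hγint hα hF hαle hs hs1).trans <| by
        gcongr
        exact monotoneOn_integral_of_nonneg hγnn hγint hs (right_mem_Icc.2 (hs.1.trans hs.2))
          hs.2)
  have hΦ_le_one : ∀ t ∈ Icc 0 T, Φ t ≤ 1 := by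
    intro t ht
    by_contra! h
    obtain ⟨s, hs, hΦs⟩ := intermediate_value_Icc (f := Φ) ht.1
      ((continuousOn_const.add (continuousOn_integral hF)).mono (Icc_subset_Icc_right ht.2))
      ⟨by simpa [Φ] using haδ.trans (min_le_left _ _), h.le⟩
    linarith [hΦ_small s ⟨hs.1, hs.2.trans ht.2⟩ hΦs.le, min_le_right ε (1 / 2)]
  intro t ht
  exact (hαle t ht).trans ((hΦ_small t ht (hΦ_le_one t ht)).trans (min_le_left _ _))

/-- Quantitative stability consequence of the Osgood lemma for the modulus
`μ(x) = x log(e + 1/x)` (with `μ(0) = 0`): the bound furnished by the Osgood lemma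
tends to `0` uniformly on `[0,T]` as the initial bound `a` tends to `0`. -/
theorem osgood_uniform_smallness (T : ℝ) (hT : 0 < T) (γ : ℝ → ℝ)
    (hγnn : ∀ t ∈ Icc 0 T, 0 ≤ γ t)
    (hγint : IntegrableOn γ (Icc 0 T)) :
    ∀ ε > 0, ∃ δ > 0, ∀ a : ℝ, 0 < a → a ≤ δ →
      ∀ α : ℝ → ℝ, Measurable α → (∀ t ∈ Icc 0 T, 0 ≤ α t) →
        IntegrableOn (fun t => γ t * (α t * Real.log (Real.exp 1 + (α t)⁻¹))) (Icc 0 T) →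
        (∀ t ∈ Icc 0 T,
          α t ≤ a + ∫ τ in (0:ℝ)..t, γ τ * (α τ * Real.log (Real.exp 1 + (α τ)⁻¹))) →
        ∀ t ∈ Icc 0 T, α t ≤ ε :=
  osgood_uniform_smallness_general T γ hγnn hγint
end

section
/- For all real numbers a ≥ 0 and b ≥ 0, one has log(e + a·b) ≤ log(e + a) · log(e + b). -/
/-!
Put `y = log (e + b) ≥ 1`, so that `e ^ y = e + b`. Bernoulli's inequality gives
`(e + a) ^ y = e ^ y (1 + a / e) ^ y ≥ (e + b) (1 + y a / e) = e + b + a (e + b) y / e`,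
and `(e + b) log (e + b) ≥ e b` makes the right-hand side at least `e + a b`.
Taking logarithms gives the claim.
-/

open Real

theorem rpow_mul_one_add_mul_div_le_add_rpow {c a y : ℝ} (hc : 0 < c) (ha : 0 ≤ a) (hy : 1 ≤ y) :
    c ^ y * (1 + y * (a / c)) ≤ (c + a) ^ y := by
  have hac : 0 ≤ a / c := div_nonneg ha hc.le
  calc c ^ y * (1 + y * (a / c)) ≤ c ^ y * (1 + a / c) ^ y :=
        mul_le_mul_of_nonneg_left (one_add_mul_self_le_rpow_one_add (by linarith) hy)
          (rpow_nonneg hc.le y)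
    _ = (c + a) ^ y := by
        rw [← mul_rpow hc.le (by linarith), mul_add, mul_one, mul_div_cancel₀ a hc.ne']

theorem one_le_log_exp_one_add {b : ℝ} (hb : 0 ≤ b) : 1 ≤ log (exp 1 + b) := by
  simpa only [log_exp] using log_le_log (exp_pos 1) (le_add_of_nonneg_right hb)

theorem exp_one_mul_le_mul_log_exp_one_add {b : ℝ} (hb : 0 ≤ b) :
    exp 1 * b ≤ (exp 1 + b) * log (exp 1 + b) := by
  have hpos : 0 < exp 1 + b := by positivity
  -- `log x ≥ log t + 1 - t / x` at `t = exp (e - 1)`, combined with `exp (e - 1) ≤ e²`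
  have hlog : exp 1 - exp (exp 1 - 1) / (exp 1 + b) ≤ log (exp 1 + b) := by
    have := one_sub_inv_le_log_of_pos (div_pos hpos (exp_pos (exp 1 - 1)))
    rw [log_div hpos.ne' (exp_ne_zero _), log_exp, inv_div] at this
    linarith
  have hexp : exp (exp 1 - 1) ≤ exp 1 * exp 1 := by
    rw [← exp_add]
    exact exp_le_exp.2 (by linarith [exp_one_lt_d9])
  have hmul := mul_le_mul_of_nonneg_left hlog hpos.le
  rw [mul_sub, mul_div_cancel₀ _ hpos.ne'] at hmul
  linarith

theorem exp_one_add_mul_le_rpow_log {a b : ℝ} (ha : 0 ≤ a) (hb : 0 ≤ b) :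
    exp 1 + a * b ≤ (exp 1 + a) ^ log (exp 1 + b) := by
  set y := log (exp 1 + b)
  have hey : exp 1 ^ y = exp 1 + b := by
    rw [exp_one_rpow, exp_log (by positivity)]
  have hkey : a * (exp 1 * b) ≤ a * ((exp 1 + b) * y) :=
    mul_le_mul_of_nonneg_left (exp_one_mul_le_mul_log_exp_one_add hb) ha
  calc exp 1 + a * b ≤ (exp 1 + b) + a * ((exp 1 + b) * y) / exp 1 := by
        have : a * b ≤ a * ((exp 1 + b) * y) / exp 1 := by
          rw [le_div_iff₀ (exp_pos 1)]
          linarith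
        linarith
    _ = exp 1 ^ y * (1 + y * (a / exp 1)) := by
        rw [hey]; field_simp
    _ ≤ (exp 1 + a) ^ y :=
        rpow_mul_one_add_mul_div_le_add_rpow (exp_pos 1) ha (one_le_log_exp_one_add hb)

/-- For all `a, b ≥ 0`, `log(e + a·b) ≤ log(e + a) · log(e + b)`. -/
theorem log_add_mul_le_mul_log_add (a b : ℝ) (ha : 0 ≤ a) (hb : 0 ≤ b) :
    Real.log (Real.exp 1 + a * b) ≤ Real.log (Real.exp 1 + a) * Real.log (Real.exp 1 + b) := by
  have h := log_le_log (by positivity) (exp_one_add_mul_le_rpow_log ha hb)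
  rwa [log_rpow (by positivity), mul_comm (log (exp 1 + b))] at h
end
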